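/- Let n be a positive integer and let a be a non-negative integer with a ≤ n. Then Σ_{k=a}^{n} [2k]·q^{n−k}·qbinom(2n, n−k) = [n+a]·qbinom(2n, n−a). -/
import Mathlib


open Polynomial

/-- The Gaussian (`q`-)binomial coefficient `qbinom n k` as a polynomial in `q = X`
with integer coefficients; it is `0` for `k > n`. -/
noncomputable def qbinom : ℕ → ℕ → Polynomial ℤ
  | _, 0 => 1
  | 0, _ + 1 => 0
  | n + 1, k + 1 => qbinom n k + X ^ (k + 1) * qbinom n (k + 1)

/-- The `q`-integer `[n] = 1 + q + ⋯ + q^{n-1}` as a polynomial in `q = X`. -/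
noncomputable def qint (n : ℕ) : Polynomial ℤ := ∑ i ∈ Finset.range n, X ^ i

lemma qint_add (a b : ℕ) : qint (a + b) = qint a + X ^ a * qint b := by
  simp [qint, Finset.sum_range_add, Finset.mul_sum, pow_add]

lemma qint_zero : qint 0 = 0 := by simp [qint]
lemma qint_one : qint 1 = 1 := by simp [qint]

lemma qbinom_zero (n : ℕ) : qbinom n 0 = 1 := by cases n <;> rfl

lemma qbinom_eq_zero : ∀ m k : ℕ, m < k → qbinom m k = 0 := by
  intro m
  induction m with
  | zero => intro k h; match k, h with | k + 1, _ => simp [qbinom]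
  | succ m ih =>
    intro k h
    match k, h with
    | k + 1, h =>
      rw [qbinom, ih k (by omega), ih (k+1) (by omega)]
      ring

lemma key : ∀ m k : ℕ, qint (k + 1) * qbinom m (k + 1) = qint (m - k) * qbinom m k := by
  intro m
  induction m with
  | zero => intro k; simp [qbinom, qint_zero]
  | succ m ih =>
    intro k
    match k with
    | 0 =>
      have h0 := ih 0
      simp only [qint_one, one_mul, Nat.sub_zero, zero_add,
        qbinom_zero m, mul_one] at h0
      show qint 1 * qbinom (m+1) 1 = qint (m + 1 - 0) * qbinom (m+1) 0
      rw [show qbinom (m+1) 1 = qbinom m 0 + X ^ 1 * qbinom m 1 from rfl,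
          qbinom_zero m, qbinom_zero (m+1),
          qint_one, one_mul, mul_one, h0,
          show m + 1 - 0 = 1 + m by omega, qint_add, qint_one, pow_one]
    | k + 1 =>
      by_cases h : k + 1 ≤ m
      · have ih1 := ih k
        have ih2 := ih (k + 1)
        have e1 := qint_add (k + 2) (m - (k + 1))
        have e2 := qint_add (k + 1) (m - k)
        rw [show k + 2 + (m - (k+1)) = m + 1 by omega] at e1
        rw [show k + 1 + (m - k) = m + 1 by omega] at e2
        have E : qint (k+2) + X^(k+2) * qint (m - (k+1)) = qint (k+1) + X^(k+1) * qint (m-k) :=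
          e1.symm.trans e2
        rw [show qbinom (m+1) (k+2) = qbinom m (k+1) + X ^ (k + 2) * qbinom m (k+2) from rfl,
            show qbinom (m+1) (k+1) = qbinom m k + X ^ (k + 1) * qbinom m (k+1) from rfl,
            show m + 1 - (k + 1) = m - k by omega]
        linear_combination X^(k+2) * ih2 + ih1 + qbinom m (k+1) * E
      · rw [qbinom_eq_zero (m+1) (k+2) (by omega),
            show m + 1 - (k + 1) = 0 by omega, qint_zero]
        ring

lemma step' (n d : ℕ) (h : d < n) :
    qint (2*(n-(d+1))) * X^(d+1) * qbinom (2*n) (d+1) + qint (n + (n-d)) * qbinom (2*n) d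
      = qint (n + (n-(d+1))) * qbinom (2*n) (d+1) := by
  have hk := key (2*n) d
  rw [show 2*n - d = n + (n - d) by omega] at hk
  have e := qint_add (d+1) (2*(n-(d+1)))
  rw [show d + 1 + 2*(n-(d+1)) = n + (n - (d+1)) by omega] at e
  linear_combination -hk - qbinom (2*n) (d+1) * e

lemma aux (n : ℕ) : ∀ d, d ≤ n →
    ∑ k ∈ Finset.Icc (n - d) n, qint (2*k) * X^(n-k) * qbinom (2*n) (n-k)
      = qint (n + (n - d)) * qbinom (2*n) d := by
  intro d
  induction d with
  | zero => simp [qbinom_zero, two_mul]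
  | succ d ih =>
    intro hd
    have hins : Finset.Icc (n-(d+1)) n = insert (n-(d+1)) (Finset.Icc (n-(d+1)+1) n) := by
      ext x; simp only [Finset.mem_Icc, Finset.mem_insert]; omega
    rw [hins, Finset.sum_insert (by simp), show n-(d+1)+1 = n-d by omega, ih (by omega),
        show n - (n-(d+1)) = d+1 by omega]
    exact step' n d (by omega)

/-- `∑_{k=a}^{n} [2k]·q^{n-k}·qbinom(2n, n-k) = [n+a]·qbinom(2n, n-a)`. -/
theorem stmt13 (n a : ℕ) (hn : 0 < n) (ha : a ≤ n) :
    ∑ k ∈ Finset.Icc a n, qint (2 * k) * X ^ (n - k) * qbinom (2 * n) (n - k) =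
      qint (n + a) * qbinom (2 * n) (n - a) := by
  have h := aux n (n - a) (Nat.sub_le n a)
  rw [show n - (n - a) = a by omega] at h
  exact h
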